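/- There exists a strictly positive continuous function q on G with q(e)=1 and q(ng) = Δ_N(n)·Δ_G(n)⁻¹·q(g) for all n ∈ N and g ∈ G, where Δ_G and Δ_N are the modular functions of G and N respectively. -/

import Mathlib

open MeasureTheory Set Topology Pointwise Filter Function DoubleCoset

/-!
The rho-function is `q g = p g⁻¹ / p 1` with `p g = ∫_N f (g n) ΔG(n)⁻¹ dn`, where `f` is a
Bruhat function for `N`: continuous, nonnegative, positive somewhere on every coset `g N`, and
with `supp f ∩ K N` relatively compact for compact `K`. The substitution `n ↦ m n` and the scaling
of `μN` under left translation give `p (g m) = ΔG(m) ΔN(m⁻¹) p g`, which becomes the required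
equivariance after inversion.

A Bruhat function is a locally finite sum of Urysohn bumps. If `H` is the subgroup generated by a
compact symmetric neighbourhood `U` of `1`, then `G` is the disjoint union of the double cosets
`H b N`, each exhausted by the open sets `(interior U) U^j b N`. The `j`-th bump is `1` on the
part of `U^(j+1) b` not yet covered by the earlier layers and vanishes on the layers two steps
below, so near any point only finitely many bumps are nonzero modulo `N`.
-/

section ModularFunction

theorem eq_of_ofReal_smul_eq {X : Type*} [MeasurableSpace X] {μ : Measure X} {s : Set X}
    (h0 : μ s ≠ 0) (htop : μ s ≠ ⊤) {a b : ℝ} (ha : 0 ≤ a) (hb : 0 ≤ b)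
    (h : ENNReal.ofReal a • μ = ENNReal.ofReal b • μ) : a = b := by
  have hs : ENNReal.ofReal a * μ s = ENNReal.ofReal b * μ s := by
    simpa using congrArg (· s) h
  exact (ENNReal.ofReal_eq_ofReal_iff ha hb).1 ((ENNReal.mul_left_inj h0 htop).1 hs)

theorem map_inv_of_map_mul {X : Type*} [Group X] {Δ : X → ℝ} (hΔ0 : ∀ x, Δ x ≠ 0)
    (hΔ : ∀ a b, Δ (a * b) = Δ a * Δ b) (a : X) : Δ a⁻¹ = (Δ a)⁻¹ := by
  have h1 : Δ 1 = 1 := (mul_eq_left₀ (hΔ0 1)).1 (by rw [← hΔ, one_mul])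
  exact eq_inv_of_mul_eq_one_right (by rw [← hΔ, mul_inv_cancel, h1])

variable {X : Type*} [Group X] [MeasurableSpace X]

theorem map_mul_of_map_inv_mul_eq_smul [TopologicalSpace X] [ContinuousMul X]
    [WeaklyLocallyCompactSpace X] [BorelSpace X] {μ : Measure X} [IsFiniteMeasureOnCompacts μ]
    [μ.IsOpenPosMeasure] {Δ : X → ℝ} (hΔ0 : ∀ x, 0 ≤ Δ x)
    (hΔ : ∀ a, μ.map (a⁻¹ * ·) = ENNReal.ofReal (Δ a) • μ) (a b : X) :
    Δ (a * b) = Δ a * Δ b := by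
  obtain ⟨K, hK, hK1⟩ := exists_compact_mem_nhds (1 : X)
  refine eq_of_ofReal_smul_eq (μ.measure_pos_of_mem_nhds hK1).ne' hK.measure_lt_top.ne
    (hΔ0 _) (mul_nonneg (hΔ0 a) (hΔ0 b)) ?_
  have hcomp : (fun g : X => (a * b)⁻¹ * g) = (b⁻¹ * ·) ∘ (a⁻¹ * ·) := by
    funext g; simp [mul_assoc]
  rw [← hΔ, hcomp, ← Measure.map_map (measurable_const_mul _) (measurable_const_mul _), hΔ a,
    Measure.map_smul, hΔ b, smul_smul, ENNReal.ofReal_mul (hΔ0 a)]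

theorem integral_comp_mul_left_of_map_eq_smul [MeasurableMul X] {E : Type*}
    [NormedAddCommGroup E] [NormedSpace ℝ E] {μ : Measure X} {m : X} {c : ℝ} (hc : 0 ≤ c)
    (hm : μ.map (m * ·) = ENNReal.ofReal c • μ) (h : X → E) :
    ∫ x, h (m * x) ∂μ = c • ∫ x, h x ∂μ := by
  rw [← (measurableEmbedding_mulLeft m).integral_map, hm, integral_smul_measure,
    ENNReal.toReal_ofReal hc]

theorem integral_comp_mul_left_mul_inv_of_map_eq_smul [MeasurableMul X] {μ : Measure X}
    {χ : X → ℝ} (hχ0 : ∀ x, χ x ≠ 0) (hχ : ∀ a b, χ (a * b) = χ a * χ b) {m : X} {c : ℝ}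
    (hc : 0 ≤ c) (hm : μ.map (m * ·) = ENNReal.ofReal c • μ) (F : X → ℝ) :
    ∫ x, F (m * x) * (χ x)⁻¹ ∂μ = χ m * c * ∫ x, F x * (χ x)⁻¹ ∂μ := by
  have hF : ∀ x, F (m * x) * (χ x)⁻¹ = χ m * (F (m * x) * (χ (m * x))⁻¹) := fun x => by
    rw [hχ]; field_simp [hχ0]
  simp_rw [hF]
  rw [integral_const_mul, integral_comp_mul_left_of_map_eq_smul hc hm (fun x => F x * (χ x)⁻¹),
    smul_eq_mul, mul_assoc]

end ModularFunction

theorem Subgroup.exists_mem_pow_of_mem_closure {G : Type*} [Group G] {U : Set G} (hU : U⁻¹ = U)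
    {x : G} (hx : x ∈ Subgroup.closure U) : ∃ j : ℕ, x ∈ U ^ j := by
  induction hx using Subgroup.closure_induction with
  | mem x hx => exact ⟨1, by simpa⟩
  | one => exact ⟨0, by simp⟩
  | mul x y _ _ hx hy =>
    obtain ⟨i, hi⟩ := hx
    obtain ⟨j, hj⟩ := hy
    exact ⟨i + j, pow_add U i j ▸ mul_mem_mul hi hj⟩
  | inv x _ hx =>
    obtain ⟨j, hj⟩ := hx
    exact ⟨j, by rw [← hU, inv_pow]; exact inv_mem_inv.2 hj⟩

theorem IsCompact.pow {M : Type*} [Monoid M] [TopologicalSpace M] [ContinuousMul M] {s : Set M}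
    (hs : IsCompact s) (n : ℕ) : IsCompact (s ^ n) := by
  induction n with
  | zero => simp
  | succ n ih => rw [pow_succ]; exact ih.mul hs

section Bruhat

variable {G : Type*} [Group G] [TopologicalSpace G]

/-- A Bruhat function without the usual normalisation `∫_N f (g n) dn = 1`. -/
structure IsBruhatFunction (N : Subgroup G) (f : G → ℝ) : Prop where
  continuous : Continuous f
  nonneg : ∀ x, 0 ≤ f x
  exists_pos : ∀ g, ∃ n ∈ N, 0 < f (g * n)
  exists_isCompact_support_inter :
    ∀ K : Set G, IsCompact K → ∃ T, IsCompact T ∧ support f ∩ (K * N) ⊆ T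

/-- Bumps, supported modulo `N` in `Ω`, whose sum is a Bruhat function on `Ω`. -/
structure IsBruhatFamily {ι : Type*} (N : Subgroup G) (Ω : Set G) (φ : ι → C(G, ℝ)) :
    Prop where
  nonneg : ∀ i x, 0 ≤ φ i x
  hasCompactSupport : ∀ i, HasCompactSupport (φ i)
  support_mul_subset : ∀ i, support (φ i) * N ⊆ Ω
  locallyFinite : ∀ x ∈ Ω, ∃ V ∈ 𝓝 x, V ⊆ Ω ∧ {i | ((support (φ i) * N) ∩ V).Nonempty}.Finite
  exists_pos : ∀ g ∈ Ω, ∃ i, ∃ n ∈ N, 0 < φ i (g * n)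

theorem IsBruhatFamily.prod {N : Subgroup G} {κ ι : Type*} {Ω : κ → Set G}
    (hΩ : Pairwise (Disjoint on Ω)) {φ : κ → ι → C(G, ℝ)} (hφ : ∀ k, IsBruhatFamily N (Ω k) (φ k)) :
    IsBruhatFamily N (⋃ k, Ω k) fun i : κ × ι => φ i.1 i.2 where
  nonneg i := (hφ i.1).nonneg i.2
  hasCompactSupport i := (hφ i.1).hasCompactSupport i.2
  support_mul_subset i := ((hφ i.1).support_mul_subset i.2).trans (subset_iUnion Ω i.1)
  locallyFinite x hx := by
    obtain ⟨k, hk⟩ := mem_iUnion.1 hx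
    obtain ⟨V, hV, hVΩ, hfin⟩ := (hφ k).locallyFinite x hk
    refine ⟨V, hV, hVΩ.trans (subset_iUnion Ω k), ((finite_singleton k).prod hfin).subset ?_⟩
    rintro ⟨k', i⟩ ⟨y, hy, hyV⟩
    have hk' : k' = k := by
      by_contra hne
      exact disjoint_left.1 (hΩ hne) ((hφ k').support_mul_subset i hy) (hVΩ hyV)
    exact ⟨hk', hk' ▸ ⟨y, hy, hyV⟩⟩
  exists_pos g hg := by
    obtain ⟨k, hk⟩ := mem_iUnion.1 hg
    obtain ⟨i, n, hn, hi⟩ := (hφ k).exists_pos g hk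
    exact ⟨(k, i), n, hn, hi⟩

theorem IsBruhatFamily.isBruhatFunction_finsum {N : Subgroup G} {ι : Type*} {φ : ι → C(G, ℝ)}
    (hφ : IsBruhatFamily N univ φ) : IsBruhatFunction N fun x => ∑ᶠ i, φ i x := by
  have hlf : LocallyFinite fun i => support (φ i) * (N : Set G) := fun x => by
    obtain ⟨V, hV, -, hfin⟩ := hφ.locallyFinite x trivial
    exact ⟨V, hV, hfin⟩
  refine ⟨continuous_finsum (fun i => (φ i).continuous)
      (hlf.subset fun i => subset_mul_left _ N.one_mem),
    fun x => finsum_nonneg fun i => hφ.nonneg i x, fun g => ?_, fun K hK => ?_⟩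
  · obtain ⟨i, n, hn, hi⟩ := hφ.exists_pos g trivial
    refine ⟨n, hn, hi.trans_le (single_le_finsum i ?_ fun j => hφ.nonneg j _)⟩
    exact (hlf.point_finite (g * n)).subset fun j hj => subset_mul_left _ N.one_mem hj
  · refine ⟨⋃ i ∈ {i | ((support (φ i) * N) ∩ K).Nonempty}, tsupport (φ i),
      (hlf.finite_nonempty_inter_compact hK).isCompact_biUnion
        fun i _ => hφ.hasCompactSupport i, ?_⟩
    rintro _ ⟨hx, k, hk, n, hn, rfl⟩
    obtain ⟨i, hi⟩ : ∃ i, φ i (k * n) ≠ 0 := by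
      by_contra! h
      exact hx (finsum_eq_zero_of_forall_eq_zero h)
    exact mem_biUnion ⟨k, ⟨k * n, hi, n⁻¹, inv_mem hn, by group⟩, hk⟩ (subset_tsupport _ hi)

variable [IsTopologicalGroup G] [LocallyCompactSpace G] {N : Subgroup G}

theorem exists_bumps_of_layers (hN : IsClosed (N : Set G)) {O L : ℕ → Set G}
    (hO : ∀ j, IsOpen (O j)) (hL : ∀ j, IsCompact (L j)) (hLO : ∀ j, L j * N ⊆ O (j + 1)) :
    ∃ φ : ℕ → C(G, ℝ), (∀ j x, 0 ≤ φ j x) ∧ (∀ j, HasCompactSupport (φ j)) ∧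
      (∀ j, EqOn (φ j) 1 (L j \ ⋃ k < j, O k)) ∧
      ∀ j x, φ j x ≠ 0 → x ∈ O (j + 1) ∧ ∀ k, k + 1 < j → x ∉ L k * N := by
  have hdisj (j : ℕ) : Disjoint (L j \ ⋃ k < j, O k)
      ((O (j + 1))ᶜ ∪ ⋃ k ∈ {k | k + 1 < j}, L k * N) := by
    refine disjoint_left.2 fun x ⟨hxL, hxO⟩ hxZ => ?_
    rcases hxZ with hx | hx
    · exact hx (hLO j (subset_mul_left _ N.one_mem hxL))
    · obtain ⟨k, hk, hxk⟩ := mem_iUnion₂.1 hx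
      exact hxO (mem_iUnion₂.2 ⟨k + 1, hk, hLO k hxk⟩)
  have hZ (j : ℕ) : IsClosed ((O (j + 1))ᶜ ∪ ⋃ k ∈ {k | k + 1 < j}, L k * N) :=
    (hO _).isClosed_compl.union <| ((finite_lt_nat j).subset fun _ => Nat.lt_of_succ_lt)
      |>.isClosed_biUnion fun k _ => IsClosed.mul_left_of_isCompact hN (hL k)
  choose φ hφ1 hφ0 hφc hφI using fun j => exists_continuous_one_zero_of_isCompact
    ((hL j).diff (isOpen_biUnion fun k _ => hO k)) (hZ j) (hdisj j)
  refine ⟨φ, fun j x => (hφI j x).1, hφc, hφ1, fun j x hx => ⟨?_, fun k hk hxk => ?_⟩⟩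
  · exact not_not.1 fun h => hx (hφ0 j (Or.inl h))
  · exact hx (hφ0 j (Or.inr (mem_iUnion₂.2 ⟨k, hk, hxk⟩)))

theorem exists_isBruhatFamily_iUnion_of_layers (hN : IsClosed (N : Set G)) {O L : ℕ → Set G}
    (hO : ∀ j, IsOpen (O j)) (hON : ∀ j, O j * N ⊆ O j) (hL : ∀ j, IsCompact (L j))
    (hOL : ∀ j, O j ⊆ L j * N) (hLO : ∀ j, L j * N ⊆ O (j + 1)) :
    ∃ φ : ℕ → C(G, ℝ), IsBruhatFamily N (⋃ j, O j) φ := by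
  classical
  obtain ⟨φ, hφ0, hφc, hφ1, hsupp⟩ := exists_bumps_of_layers hN hO hL hLO
  have hmem {j x n} (hx : x ∈ O j) (hn : n ∈ N) : x * n ∈ O j := hON j (mul_mem_mul hx hn)
  refine ⟨φ, hφ0, hφc, ?_, fun x hx => ?_, fun g hg => ?_⟩
  · rintro j _ ⟨x, hx, n, hn, rfl⟩
    exact mem_iUnion.2 ⟨j + 1, hmem (hsupp j x hx).1 hn⟩
  · obtain ⟨m, hm⟩ := mem_iUnion.1 hx
    refine ⟨O m, (hO m).mem_nhds hm, subset_iUnion O m, (finite_lt_nat (m + 2)).subset ?_⟩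
    rintro j ⟨_, ⟨x, hx, n, hn, rfl⟩, hxn⟩
    show j < m + 2
    by_contra! hj
    exact (hsupp j x hx).2 m (by omega) (hOL m (by simpa using hmem hxn (inv_mem hn)))
  · have hex : ∃ m, g ∈ O m := mem_iUnion.1 hg
    obtain ⟨l, hl, n, hn, rfl⟩ := hOL _ (Nat.find_spec hex)
    refine ⟨Nat.find hex, n⁻¹, inv_mem hn, ?_⟩
    have hl' : l ∉ ⋃ k < Nat.find hex, O k := by
      simp only [mem_iUnion, not_exists]
      exact fun k hk hlk => Nat.find_min hex hk (hmem hlk hn)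
    rw [mul_inv_cancel_right, hφ1 _ ⟨hl, hl'⟩]
    exact one_pos

theorem exists_isBruhatFamily_doubleCoset (hN : IsClosed (N : Set G)) {U : Set G}
    (hUc : IsCompact U) (hU1 : (1 : G) ∈ interior U) (hUinv : U⁻¹ = U) (b : G) :
    ∃ φ : ℕ → C(G, ℝ),
      IsBruhatFamily N (doubleCoset b (Subgroup.closure U : Set G) N) φ := by
  have hsat (s : Set G) : s * N * N = s * N := by rw [mul_assoc, coe_mul_coe]
  have hstep (j : ℕ) : interior U * U ^ j ⊆ U ^ (j + 1) :=
    pow_succ' U j ▸ mul_subset_mul_right interior_subset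
  have hlayers : ⋃ j, interior U * U ^ j * {b} * (N : Set G) =
      doubleCoset b (Subgroup.closure U : Set G) N := by
    refine Subset.antisymm (iUnion_subset fun j => ?_) fun x hx => ?_
    · exact mul_subset_mul_right <| mul_subset_mul_right <|
        (hstep j).trans (Subgroup.pow_subset Subgroup.subset_closure)
    · obtain ⟨h, hh, n, hn, rfl⟩ := mem_doubleCoset.1 hx
      obtain ⟨j, hj⟩ := Subgroup.exists_mem_pow_of_mem_closure hUinv hh
      exact mem_iUnion.2 ⟨j, mul_mem_mul (mul_mem_mul (subset_mul_right _ hU1 hj) rfl) hn⟩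
  rw [← hlayers]
  exact exists_isBruhatFamily_iUnion_of_layers hN (L := fun j => U ^ (j + 1) * {b})
    (fun j => isOpen_interior.mul_right.mul_right.mul_right) (fun j => (hsat _).subset)
    (fun j => (hUc.pow (j + 1)).mul isCompact_singleton)
    (fun j => mul_subset_mul_right (mul_subset_mul_right (hstep j)))
    (fun j => mul_subset_mul_right (mul_subset_mul_right (subset_mul_right _ hU1)))

theorem exists_isBruhatFunction (hN : IsClosed (N : Set G)) : ∃ f, IsBruhatFunction N f := by
  obtain ⟨K, hKc, hK1⟩ := exists_compact_mem_nhds (1 : G)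
  obtain ⟨U, hU1, hUcl, hUinv, hUK⟩ := exists_closed_nhds_one_inv_eq_mul_subset hK1
  have hUc : IsCompact U :=
    hKc.of_isClosed_subset hUcl ((subset_mul_left U (mem_of_mem_nhds hU1)).trans hUK)
  choose φ hφ using fun q : Quotient (Subgroup.closure U : Set G) N =>
    exists_isBruhatFamily_doubleCoset hN hUc (mem_interior_iff_mem_nhds.2 hU1) hUinv q.out
  have hfam := IsBruhatFamily.prod (fun _ _ hne => disjoint_out hne) hφ
  have hcover : ⋃ q : Quotient (Subgroup.closure U : Set G) N,
      doubleCoset q.out (Subgroup.closure U : Set G) N = univ :=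
    iUnion_quotToDoubleCoset _ _
  rw [hcover] at hfam
  exact ⟨_, hfam.isBruhatFunction_finsum⟩

theorem IsBruhatFunction.exists_nhds_isCompact_eq_zero {f : G → ℝ} (hf : IsBruhatFunction N f)
    (hN : IsClosed (N : Set G)) (g : G) :
    ∃ Q ∈ 𝓝 g, ∃ L : Set N, IsCompact L ∧ ∀ y ∈ Q, ∀ n ∉ L, f (y * n) = 0 := by
  obtain ⟨Q, hQc, hQ⟩ := exists_compact_mem_nhds g
  obtain ⟨T, hT, hfT⟩ := hf.exists_isCompact_support_inter Q hQc
  have hval : IsClosedEmbedding ((↑) : N → G) := .subtypeVal hN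
  refine ⟨Q, hQ, (↑) ⁻¹' (Q⁻¹ * T), hval.isCompact_preimage (hQc.inv.mul hT),
    fun y hy n hn => ?_⟩
  by_contra hne
  exact hn ⟨y⁻¹, inv_mem_inv.2 hy, y * n, hfT ⟨hne, mul_mem_mul hy n.2⟩, by group⟩

end Bruhat

section BruhatIntegral

variable {G : Type*} [Group G] [TopologicalSpace G] [IsTopologicalGroup G]
  [LocallyCompactSpace G] {N : Subgroup G} [MeasurableSpace N] [BorelSpace N]
  (μ : Measure N) [IsFiniteMeasureOnCompacts μ] {f : G → ℝ} {w : N → ℝ}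

theorem IsBruhatFunction.continuous_integral_mul (hf : IsBruhatFunction N f)
    (hN : IsClosed (N : Set G)) (hw : Continuous w) :
    Continuous fun g => ∫ n, f (g * n) * w n ∂μ := by
  refine continuous_iff_continuousAt.2 fun g => ?_
  obtain ⟨Q, hQ, L, hL, hfL⟩ := hf.exists_nhds_isCompact_eq_zero hN g
  refine (continuousOn_integral_of_compact_support hL ?_
    fun y n hy hn => by rw [hfL y hy n hn, zero_mul]).continuousAt hQ
  have hval : Continuous fun p : G × N => p.1 * p.2 :=
    continuous_fst.mul (continuous_subtype_val.comp continuous_snd)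
  exact ((hf.continuous.comp hval).mul (hw.comp continuous_snd)).continuousOn

theorem IsBruhatFunction.integral_mul_pos [μ.IsOpenPosMeasure] (hf : IsBruhatFunction N f)
    (hN : IsClosed (N : Set G)) (hw : Continuous w) (hw0 : ∀ n, 0 < w n) (g : G) :
    0 < ∫ n, f (g * n) * w n ∂μ := by
  obtain ⟨Q, hQ, L, hL, hfL⟩ := hf.exists_nhds_isCompact_eq_zero hN g
  obtain ⟨n, hn, hfn⟩ := hf.exists_pos g
  refine Continuous.integral_pos_of_hasCompactSupport_nonneg_nonzero (x := ⟨n, hn⟩)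
    ((hf.continuous.comp (continuous_const.mul continuous_subtype_val)).mul hw)
    (HasCompactSupport.intro hL fun n hn => ?_) (fun n => mul_nonneg (hf.nonneg _) (hw0 n).le)
    (mul_pos hfn (hw0 _)).ne'
  rw [hfL g (mem_of_mem_nhds hQ) n hn, zero_mul]

end BruhatIntegral

theorem exists_rho_function_general
    {G : Type*} [Group G] [TopologicalSpace G] [IsTopologicalGroup G]
    [LocallyCompactSpace G] [MeasurableSpace G] [BorelSpace G]
    (N : Subgroup G) (hN : IsClosed (N : Set G))
    (μG : Measure G) (μN : Measure N)
    [IsFiniteMeasureOnCompacts μG] [μG.IsOpenPosMeasure]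
    [IsFiniteMeasureOnCompacts μN] [μN.IsOpenPosMeasure]
    (ΔG : G → ℝ) (hΔGpos : ∀ g, 0 < ΔG g) (hΔGcont : Continuous ΔG)
    (hΔG : ∀ a : G, μG.map (fun g => a⁻¹ * g) = ENNReal.ofReal (ΔG a) • μG)
    (ΔN : N → ℝ) (hΔNpos : ∀ n, 0 < ΔN n)
    (hΔN : ∀ a : N, μN.map (fun n => a⁻¹ * n) = ENNReal.ofReal (ΔN a) • μN) :
    ∃ q : G → ℝ, Continuous q ∧ (∀ g, 0 < q g) ∧ q 1 = 1 ∧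
      ∀ n : N, ∀ g : G, q ((n : G) * g) = ΔN n * (ΔG (n : G))⁻¹ * q g := by
  have hΔGmul := map_mul_of_map_inv_mul_eq_smul (fun g => (hΔGpos g).le) hΔG
  obtain ⟨f, hf⟩ := exists_isBruhatFunction hN
  set p : G → ℝ := fun g => ∫ n : N, f (g * n) * (ΔG n)⁻¹ ∂μN
  have hw : Continuous fun n : N => (ΔG n)⁻¹ :=
    (hΔGcont.comp continuous_subtype_val).inv₀ fun n => (hΔGpos n).ne'
  have hp_pos : ∀ g, 0 < p g := hf.integral_mul_pos μN hN hw fun n => inv_pos.2 (hΔGpos n)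
  have hp_mul (g : G) (m : N) : p (g * m) = ΔG m * ΔN m⁻¹ * p g := by
    simpa [p, mul_assoc] using integral_comp_mul_left_mul_inv_of_map_eq_smul
      (χ := fun n : N => ΔG n) (fun n => (hΔGpos n).ne') (fun a b => hΔGmul a b)
      (hΔNpos m⁻¹).le (by simpa using hΔN m⁻¹) fun n => f (g * n)
  refine ⟨fun g => p g⁻¹ / p 1,
    ((hf.continuous_integral_mul μN hN hw).comp continuous_inv).div_const _,
    fun g => div_pos (hp_pos _) (hp_pos 1), by simp [(hp_pos 1).ne'], fun n g => ?_⟩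
  dsimp only
  rw [mul_inv_rev, ← Subgroup.coe_inv, hp_mul, Subgroup.coe_inv,
    map_inv_of_map_mul (fun g => (hΔGpos g).ne') hΔGmul, inv_inv]
  ring

/-- **Existence of the rho-function.**
Let `G` be a locally compact group with right Haar measure `μG` and `N` a closed subgroup
with right Haar measure `μN`.  Let `ΔG` and `ΔN` be the modular functions of `G` and `N`,
characterized by `∫ f(a⁻¹ g) dg = Δ(a) ∫ f(g) dg` for right Haar measure, i.e. by
`μ.map (fun g => a⁻¹ * g) = Δ(a) • μ`.  Then there exists a strictly positive continuous
function `q` on `G` with `q(1) = 1` and `q (n * g) = ΔN n * (ΔG n)⁻¹ * q g` for all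
`n ∈ N`, `g ∈ G`. -/
theorem exists_rho_function
    {G : Type*} [Group G] [TopologicalSpace G] [IsTopologicalGroup G]
    [LocallyCompactSpace G] [MeasurableSpace G] [BorelSpace G]
    (N : Subgroup G) (hN : IsClosed (N : Set G))
    (μG : Measure G) (μN : Measure N)
    [IsFiniteMeasureOnCompacts μG] [μG.IsOpenPosMeasure]
    [IsFiniteMeasureOnCompacts μN] [μN.IsOpenPosMeasure]
    (hμG : ∀ a : G, μG.map (fun g => g * a) = μG)
    (hμN : ∀ a : N, μN.map (fun n => n * a) = μN)
    (ΔG : G → ℝ) (hΔGpos : ∀ g, 0 < ΔG g) (hΔGcont : Continuous ΔG)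
    (hΔG : ∀ a : G, μG.map (fun g => a⁻¹ * g) = ENNReal.ofReal (ΔG a) • μG)
    (ΔN : N → ℝ) (hΔNpos : ∀ n, 0 < ΔN n) (hΔNcont : Continuous ΔN)
    (hΔN : ∀ a : N, μN.map (fun n => a⁻¹ * n) = ENNReal.ofReal (ΔN a) • μN) :
    ∃ q : G → ℝ, Continuous q ∧ (∀ g, 0 < q g) ∧ q 1 = 1 ∧
      ∀ n : N, ∀ g : G, q ((n : G) * g) = ΔN n * (ΔG (n : G))⁻¹ * q g :=
  exists_rho_function_general N hN μG μN ΔG hΔGpos hΔGcont hΔG ΔN hΔNpos hΔN
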